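/- Fix p ∈ (1, ∞) with conjugate exponent q (1/p + 1/q = 1). If 𝒩 is dense in L^p(0,1), then ζ(z) ≠ 0 for all z with Re(z) > 1/p. -/

import Mathlib

/-!
For `0 < b ≤ 1`, `0 < re s` and `s ≠ 1`,
`∫₀¹ {b/x} x^(s-1) dx = b/(s-1) - ζ(s) b^s/s`: split `(0,1)` at `b`, where `{b/x} = b/x` on
`[b,1]`, and rescale `(0,b)` to `(0,1)`, which reduces everything to `b = 1`. For `re s > 1`
the case `b = 1` follows from `{1/x} = 1/x - ⌊1/x⌋` and
`∫₀¹ ⌊1/x⌋ x^(s-1) dx = ∑ₙ ∫₀^{1/(n+1)} x^(s-1) dx = ζ(s)/s`; the left side is a Mellin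
transform, holomorphic on `re s > 0`, so the identity continues analytically. Hence, for
`f(x) = ∑ cᵢ {βᵢ/x}` with `∑ cᵢ βᵢ = 0`, `z ∫₀¹ (1 - f(x)) x^(z-1) dx = 1 + ζ(z) ∑ cᵢ βᵢ^z`.
If `ζ(z) = 0` with `re z > 1/p`, the left side is `1`, while Hölder bounds it by
`|z| ‖1 - f‖_p ‖x^(z-1)‖_q`, where `‖x^(z-1)‖_q < ∞` because `(re z - 1) q > -1`; density makes
this bound as small as we like.
-/

open MeasureTheory Set Complex Filter

lemma integral_Ioc_cpow_sub_one {c : ℝ} (hc : 0 ≤ c) {s : ℂ} (hs : 0 < s.re) :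
    ∫ x in Ioc (0 : ℝ) c, (x : ℂ) ^ (s - 1) = (c : ℂ) ^ s / s := by
  rw [← intervalIntegral.integral_of_le hc, integral_cpow (Or.inl (by simpa using hs)),
    sub_add_cancel, ofReal_zero, zero_cpow (ne_zero_of_re_pos hs), sub_zero]

lemma integral_Ioo_cpow_sub_one {s : ℂ} (hs : 0 < s.re) :
    ∫ x in Ioo (0 : ℝ) 1, (x : ℂ) ^ (s - 1) = 1 / s := by
  rw [← integral_Ioc_eq_integral_Ioo, integral_Ioc_cpow_sub_one zero_le_one hs, ofReal_one,
    one_cpow]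

lemma integral_Ioc_norm_cpow_sub_one {c : ℝ} (hc : 0 ≤ c) {s : ℂ} (hs : 0 < s.re) :
    ∫ x in Ioc (0 : ℝ) c, ‖(x : ℂ) ^ (s - 1)‖ = c ^ s.re / s.re := by
  rw [setIntegral_congr_fun measurableSet_Ioc fun x hx => by
      rw [norm_cpow_eq_rpow_re_of_pos hx.1, sub_re, one_re],
    ← intervalIntegral.integral_of_le hc, integral_rpow (Or.inl (by linarith)), sub_add_cancel,
    Real.zero_rpow hs.ne', sub_zero]

lemma integrableOn_Ioc_cpow_sub_one {c : ℝ} (hc : 0 ≤ c) {s : ℂ} (hs : 0 < s.re) :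
    IntegrableOn (fun x : ℝ => (x : ℂ) ^ (s - 1)) (Ioc 0 c) :=
  (intervalIntegrable_iff_integrableOn_Ioc_of_le hc).1
    (intervalIntegral.intervalIntegrable_cpow' (by simpa using hs))

lemma integrableOn_Ioc_mul_cpow_sub_one {c : ℝ} (hc : 0 ≤ c) {f : ℝ → ℂ}
    (hf : AEStronglyMeasurable f (volume.restrict (Ioc 0 c))) {C : ℝ} (hC : ∀ x, ‖f x‖ ≤ C)
    {s : ℂ} (hs : 0 < s.re) :
    IntegrableOn (fun x : ℝ => f x * (x : ℂ) ^ (s - 1)) (Ioc 0 c) :=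
  (integrableOn_Ioc_cpow_sub_one hc hs).bdd_mul hf (.of_forall hC)

lemma lt_natFloor_one_div_iff {x : ℝ} (hx : 0 < x) (n : ℕ) :
    n < ⌊1 / x⌋₊ ↔ x ∈ Ioc 0 (1 / (n + 1 : ℝ)) := by
  rw [Nat.lt_iff_add_one_le, Nat.le_floor_iff (by positivity), mem_Ioc,
    le_one_div hx (by positivity)]
  simp [hx]

lemma tsum_indicator_Ioc_one_div {x : ℝ} (hx : 0 < x) (f : ℝ → ℂ) :
    ∑' n : ℕ, (Ioc 0 (1 / (n + 1) : ℝ)).indicator f x = ⌊1 / x⌋₊ * f x := by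
  rw [tsum_eq_sum (s := Finset.range ⌊1 / x⌋₊) fun n hn => indicator_of_notMem
      (by rwa [Finset.mem_range, lt_natFloor_one_div_iff hx] at hn) f,
    Finset.sum_congr rfl fun n hn => indicator_of_mem
      (by rwa [Finset.mem_range, lt_natFloor_one_div_iff hx] at hn) f]
  simp

lemma ofReal_one_div_nat_add_one_cpow (n : ℕ) (s : ℂ) :
    ((1 / (n + 1) : ℝ) : ℂ) ^ s = 1 / ((n : ℂ) + 1) ^ s := by
  rw [one_div, one_div, ofReal_inv,
    inv_cpow _ _ (by rw [arg_ofReal_of_nonneg (by positivity)]; exact Real.pi_pos.ne)]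
  push_cast
  rfl

lemma integral_Ioo_natFloor_one_div_mul_cpow {s : ℂ} (hs : 1 < s.re) :
    ∫ x in Ioo (0 : ℝ) 1, (⌊1 / x⌋₊ : ℂ) * (x : ℂ) ^ (s - 1) = riemannZeta s / s := by
  have hs0 : 0 < s.re := one_pos.trans hs
  set F : ℕ → ℝ → ℂ := fun n =>
    (Ioc 0 (1 / (n + 1) : ℝ)).indicator fun x => (x : ℂ) ^ (s - 1)
  have hsub (n : ℕ) : Ioc 0 (1 / (n + 1) : ℝ) ⊆ Ioc 0 1 :=
    Ioc_subset_Ioc_right (div_le_one_of_le₀ (by simp) (by positivity))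
  have hF (n : ℕ) : ∫ x in Ioc 0 1, F n x = 1 / ((n : ℂ) + 1) ^ s / s := by
    rw [integral_indicator measurableSet_Ioc, Measure.restrict_restrict measurableSet_Ioc,
      inter_eq_left.2 (hsub n), integral_Ioc_cpow_sub_one (by positivity) hs0,
      ofReal_one_div_nat_add_one_cpow]
  have hF_int (n : ℕ) : Integrable (F n) (volume.restrict (Ioc 0 1)) :=
    (integrable_indicator_iff measurableSet_Ioc).2
      ((integrableOn_Ioc_cpow_sub_one (by positivity) hs0).restrict)
  have hF_norm (n : ℕ) : ∫ x in Ioc 0 1, ‖F n x‖ = (1 / (n + 1) : ℝ) ^ s.re / s.re := by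
    simp_rw [F, norm_indicator_eq_indicator_norm]
    rw [integral_indicator measurableSet_Ioc, Measure.restrict_restrict measurableSet_Ioc,
      inter_eq_left.2 (hsub n), integral_Ioc_norm_cpow_sub_one (by positivity) hs0]
  have hsummable : Summable fun n => ∫ x in Ioc 0 1, ‖F n x‖ := by
    simp_rw [hF_norm]
    refine Summable.div_const ?_ _
    refine ((Real.summable_one_div_nat_add_rpow 1 s.re).2 hs).congr fun n => ?_
    rw [abs_of_pos (by positivity), Real.div_rpow zero_le_one (by positivity), Real.one_rpow]
  rw [← integral_Ioc_eq_integral_Ioo,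
    setIntegral_congr_fun measurableSet_Ioc fun x hx =>
      (tsum_indicator_Ioc_one_div hx.1 fun x => (x : ℂ) ^ (s - 1)).symm,
    ← integral_tsum_of_summable_integral_norm hF_int hsummable, tsum_congr hF, tsum_div_const,
    zeta_eq_tsum_one_div_nat_add_one_cpow hs]

lemma mellin_indicator_Ioo_zero_one (f : ℝ → ℂ) (s : ℂ) :
    mellin ((Ioo 0 1).indicator f) s = ∫ x in Ioo (0 : ℝ) 1, f x * (x : ℂ) ^ (s - 1) := by
  rw [mellin, ← integral_indicator measurableSet_Ioi, ← integral_indicator measurableSet_Ioo]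
  congr 1 with x
  by_cases hx : x ∈ Ioo 0 1
  · simp [hx, hx.1, mul_comm]
  · simp [hx]

lemma differentiableAt_integral_Ioo_mul_cpow_sub_one {f : ℝ → ℂ}
    (hf : AEStronglyMeasurable f (volume.restrict (Ioo 0 1))) {C : ℝ} (hC : ∀ x, ‖f x‖ ≤ C)
    {s : ℂ} (hs : 0 < s.re) :
    DifferentiableAt ℂ (fun s => ∫ x in Ioo (0 : ℝ) 1, f x * (x : ℂ) ^ (s - 1)) s := by
  simp_rw [← mellin_indicator_Ioo_zero_one]
  have hint : Integrable ((Ioo 0 1).indicator f) := by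
    rw [integrable_indicator_iff measurableSet_Ioo]
    exact Integrable.of_bound hf C (.of_forall hC)
  have hbound : ∀ x, ‖(Ioo 0 1).indicator f x‖ ≤ C := fun x =>
    (norm_indicator_le_norm_self f x).trans (hC x)
  refine mellin_differentiableAt_of_isBigO_rpow (a := s.re + 1) (b := 0)
    (hint.locallyIntegrable.locallyIntegrableOn _) ?_ (lt_add_one _) ?_ hs
  · refine Asymptotics.IsBigO.of_bound 0 ?_
    filter_upwards [eventually_ge_atTop 1] with x hx
    simp [indicator_of_notMem (fun h : x ∈ Ioo 0 1 => h.2.not_ge hx)]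
  · refine Asymptotics.IsBigO.of_bound C ?_
    filter_upwards [self_mem_nhdsWithin] with x hx
    simpa using hbound x

lemma measurable_ofReal_fract_div (b : ℝ) :
    Measurable fun x : ℝ => ((Int.fract (b / x) : ℝ) : ℂ) := by
  fun_prop

lemma norm_ofReal_fract_le_one (a : ℝ) : ‖((Int.fract a : ℝ) : ℂ)‖ ≤ 1 := by
  rw [norm_real, Real.norm_of_nonneg (Int.fract_nonneg a)]
  exact (Int.fract_lt_one a).le

lemma fract_eq_sub_natFloor {a : ℝ} (ha : 0 ≤ a) : Int.fract a = a - ⌊a⌋₊ := by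
  rw [natCast_floor_eq_intCast_floor ha, Int.fract]

lemma integral_Ioo_fract_one_div_mul_cpow_of_one_lt {s : ℂ} (hs : 1 < s.re) :
    ∫ x in Ioo (0 : ℝ) 1, ((Int.fract (1 / x) : ℝ) : ℂ) * (x : ℂ) ^ (s - 1) =
      (1 - riemannZeta₀ s) / s := by
  have hs1 : s ≠ 1 := by rintro rfl; simp at hs
  have hs0 : s ≠ 0 := ne_zero_of_re_pos (one_pos.trans hs)
  have hs' : 0 < (s - 1).re := by simpa using hs
  have hsplit : EqOn (fun x : ℝ => ((Int.fract (1 / x) : ℝ) : ℂ) * (x : ℂ) ^ (s - 1))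
      (fun x => (x : ℂ) ^ (s - 1 - 1) - ⌊1 / x⌋₊ * (x : ℂ) ^ (s - 1)) (Ioo 0 1) := by
    intro x hx
    have hx0 : (x : ℂ) ≠ 0 := ofReal_ne_zero.2 hx.1.ne'
    dsimp only
    rw [fract_eq_sub_natFloor (one_div_pos.2 hx.1).le, cpow_sub (s - 1) 1 hx0, cpow_one]
    push_cast
    field_simp
  have hpow : IntegrableOn (fun x : ℝ => (x : ℂ) ^ (s - 1 - 1)) (Ioo 0 1) :=
    (integrableOn_Ioc_cpow_sub_one zero_le_one hs').mono_set Ioo_subset_Ioc_self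
  have hfract :
      IntegrableOn (fun x : ℝ => ((Int.fract (1 / x) : ℝ) : ℂ) * (x : ℂ) ^ (s - 1)) (Ioo 0 1) :=
    (integrableOn_Ioc_mul_cpow_sub_one zero_le_one
      (measurable_ofReal_fract_div 1).aestronglyMeasurable (fun x => norm_ofReal_fract_le_one _)
      (one_pos.trans hs)).mono_set Ioo_subset_Ioc_self
  have hfloor : IntegrableOn (fun x : ℝ => (⌊1 / x⌋₊ : ℂ) * (x : ℂ) ^ (s - 1)) (Ioo 0 1) :=
    (hpow.sub hfract).congr_fun (fun x hx => by simp only [Pi.sub_apply, hsplit hx]; ring)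
      measurableSet_Ioo
  rw [setIntegral_congr_fun measurableSet_Ioo hsplit, integral_sub hpow hfloor,
    integral_Ioo_cpow_sub_one hs', integral_Ioo_natFloor_one_div_mul_cpow hs,
    riemannZeta_eq_inv_sub_add hs1]
  field_simp
  ring

lemma integral_Ioo_fract_one_div_mul_cpow {s : ℂ} (hs : 0 < s.re) :
    ∫ x in Ioo (0 : ℝ) 1, ((Int.fract (1 / x) : ℝ) : ℂ) * (x : ℂ) ^ (s - 1) =
      (1 - riemannZeta₀ s) / s := by
  have hU : IsOpen {s : ℂ | 0 < s.re} := isOpen_lt continuous_const continuous_re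
  have hLHS : AnalyticOnNhd ℂ
      (fun s => ∫ x in Ioo (0 : ℝ) 1, ((Int.fract (1 / x) : ℝ) : ℂ) * (x : ℂ) ^ (s - 1))
      {s : ℂ | 0 < s.re} :=
    DifferentiableOn.analyticOnNhd (fun s hs =>
      (differentiableAt_integral_Ioo_mul_cpow_sub_one
        (measurable_ofReal_fract_div 1).aestronglyMeasurable
        (fun x => norm_ofReal_fract_le_one _) hs).differentiableWithinAt) hU
  have hRHS : AnalyticOnNhd ℂ (fun s => (1 - riemannZeta₀ s) / s) {s : ℂ | 0 < s.re} :=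
    DifferentiableOn.analyticOnNhd (fun s hs =>
      (((differentiable_riemannZeta₀ s).const_sub 1).div differentiableAt_id
        (ne_zero_of_re_pos hs)).differentiableWithinAt) hU
  refine hLHS.eqOn_of_preconnected_of_eventuallyEq hRHS
    (convex_halfSpace_re_gt 0).isPreconnected (z₀ := 2) (by simp) ?_ hs
  filter_upwards [(isOpen_lt continuous_const continuous_re).mem_nhds
    (show (1 : ℝ) < (2 : ℂ).re by norm_num)] with s (hs : 1 < s.re)
  exact integral_Ioo_fract_one_div_mul_cpow_of_one_lt hs

lemma intervalIntegral_fract_div_mul_cpow_zero_self {b : ℝ} (hb : 0 < b) {s : ℂ}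
    (hs : 0 < s.re) :
    ∫ x in (0 : ℝ)..b, ((Int.fract (b / x) : ℝ) : ℂ) * (x : ℂ) ^ (s - 1) =
      (b : ℂ) ^ s * ((1 - riemannZeta₀ s) / s) := by
  have hscale := intervalIntegral.integral_comp_mul_left
    (fun x : ℝ => ((Int.fract (b / x) : ℝ) : ℂ) * (x : ℂ) ^ (s - 1)) hb.ne' (a := 0) (b := 1)
  rw [mul_zero, mul_one, eq_inv_smul_iff₀ hb.ne'] at hscale
  have hrescaled :
      EqOn (fun x : ℝ => ((Int.fract (b / (b * x)) : ℝ) : ℂ) * ((b * x : ℝ) : ℂ) ^ (s - 1))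
      (fun x => (b : ℂ) ^ (s - 1) * (((Int.fract (1 / x) : ℝ) : ℂ) * (x : ℂ) ^ (s - 1)))
      (Ioo 0 1) := by
    intro x hx
    dsimp only
    rw [div_mul_cancel_left₀ hb.ne', ← one_div, ofReal_mul,
      mul_cpow_ofReal_nonneg hb.le hx.1.le]
    ring
  rw [← hscale, intervalIntegral.integral_of_le zero_le_one, integral_Ioc_eq_integral_Ioo,
    setIntegral_congr_fun measurableSet_Ioo hrescaled, integral_const_mul,
    integral_Ioo_fract_one_div_mul_cpow hs, real_smul,
    cpow_sub s 1 (ofReal_ne_zero.2 hb.ne'), cpow_one]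
  field_simp [ofReal_ne_zero.2 hb.ne']

lemma intervalIntegral_fract_div_mul_cpow_self_one {b : ℝ} (hb0 : 0 < b) (hb1 : b ≤ 1) {s : ℂ}
    (hs1 : s ≠ 1) :
    ∫ x in b..1, ((Int.fract (b / x) : ℝ) : ℂ) * (x : ℂ) ^ (s - 1) =
      b * (1 - (b : ℂ) ^ (s - 1)) / (s - 1) := by
  have hfract : EqOn (fun x : ℝ => ((Int.fract (b / x) : ℝ) : ℂ) * (x : ℂ) ^ (s - 1))
      (fun x => b * (x : ℂ) ^ (s - 1 - 1)) (Ioc b 1) := by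
    intro x hx
    have hx0 : 0 < x := hb0.trans hx.1
    dsimp only
    rw [Int.fract_eq_self.2 ⟨by positivity, (div_lt_one hx0).2 hx.1⟩,
      cpow_sub (s - 1) 1 (ofReal_ne_zero.2 hx0.ne'), cpow_one]
    push_cast
    field_simp
  rw [intervalIntegral.integral_of_le hb1, setIntegral_congr_fun measurableSet_Ioc hfract,
    ← intervalIntegral.integral_of_le hb1, intervalIntegral.integral_const_mul,
    integral_cpow (Or.inr ⟨by contrapose! hs1; linear_combination hs1, by
      rw [uIcc_of_le hb1]; exact fun h => hb0.not_ge h.1⟩),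
    sub_add_cancel, ofReal_one, one_cpow]
  ring

lemma integral_Ioo_fract_div_mul_cpow {b : ℝ} (hb0 : 0 < b) (hb1 : b ≤ 1) {s : ℂ}
    (hs : 0 < s.re) (hs1 : s ≠ 1) :
    ∫ x in Ioo (0 : ℝ) 1, ((Int.fract (b / x) : ℝ) : ℂ) * (x : ℂ) ^ (s - 1) =
      b / (s - 1) - riemannZeta s * (b : ℂ) ^ s / s := by
  have hint := integrableOn_Ioc_mul_cpow_sub_one zero_le_one
    (measurable_ofReal_fract_div b).aestronglyMeasurable (fun x => norm_ofReal_fract_le_one _) hs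
  rw [← integral_Ioc_eq_integral_Ioo, ← intervalIntegral.integral_of_le zero_le_one,
    ← intervalIntegral.integral_add_adjacent_intervals (b := b)
      ((intervalIntegrable_iff_integrableOn_Ioc_of_le hb0.le).2
        (hint.mono_set (Ioc_subset_Ioc_right hb1)))
      ((intervalIntegrable_iff_integrableOn_Ioc_of_le hb1).2
        (hint.mono_set (Ioc_subset_Ioc_left hb0.le))),
    intervalIntegral_fract_div_mul_cpow_zero_self hb0 hs,
    intervalIntegral_fract_div_mul_cpow_self_one hb0 hb1 hs1, riemannZeta_eq_inv_sub_add hs1,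
    cpow_sub s 1 (ofReal_ne_zero.2 hb0.ne'), cpow_one]
  field_simp [ofReal_ne_zero.2 hb0.ne', ne_zero_of_re_pos hs, sub_ne_zero.2 hs1]
  ring

lemma integral_Ioo_one_sub_sum_fract_div_smul_cpow {ι : Type*} [Fintype ι] (c β : ι → ℝ)
    (hβ : ∀ i, β i ∈ Ioc 0 1) (hcβ : ∑ i, c i * β i = 0) {s : ℂ} (hs : 0 < s.re) (hs1 : s ≠ 1) :
    ∫ x in Ioo (0 : ℝ) 1, (1 - ∑ i, c i * Int.fract (β i / x)) • (x : ℂ) ^ (s - 1) =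
      (1 + riemannZeta s * ∑ i, c i * (β i : ℂ) ^ s) / s := by
  have hexpand : EqOn (fun x : ℝ => (1 - ∑ i, c i * Int.fract (β i / x)) • (x : ℂ) ^ (s - 1))
      (fun x => (x : ℂ) ^ (s - 1) -
        ∑ i, (c i : ℂ) * (((Int.fract (β i / x) : ℝ) : ℂ) * (x : ℂ) ^ (s - 1))) (Ioo 0 1) := by
    intro x _
    simp only [real_smul, ofReal_sub, ofReal_one, ofReal_sum, ofReal_mul, sub_mul, one_mul,
      Finset.sum_mul, mul_assoc]
  have hint (i : ι) := integrableOn_Ioc_mul_cpow_sub_one zero_le_one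
    (measurable_ofReal_fract_div (β i)).aestronglyMeasurable
    (fun x => norm_ofReal_fract_le_one _) hs
    |>.mono_set Ioo_subset_Ioc_self |>.const_mul (c i : ℂ)
  rw [setIntegral_congr_fun measurableSet_Ioo hexpand,
    integral_sub ((integrableOn_Ioc_cpow_sub_one zero_le_one hs).mono_set Ioo_subset_Ioc_self)
      (integrable_finsetSum _ fun i _ => hint i),
    integral_finsetSum _ fun i _ => hint i, integral_Ioo_cpow_sub_one hs,
    Finset.sum_congr rfl fun i _ => by
    rw [integral_const_mul, integral_Ioo_fract_div_mul_cpow (hβ i).1 (hβ i).2 hs hs1]]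
  have hcβ' : ∑ i, (c i : ℂ) * β i = 0 := by exact_mod_cast hcβ
  simp only [mul_sub, Finset.sum_sub_distrib, mul_div_assoc', ← Finset.sum_div, hcβ',
    mul_left_comm (c _ : ℂ) (riemannZeta s), ← Finset.mul_sum]
  ring

lemma enorm_integral_smul_le_eLpNorm_mul_eLpNorm {α E : Type*} [MeasurableSpace α]
    {μ : Measure α} [NormedAddCommGroup E] [NormedSpace ℝ E] {p q : ENNReal}
    [p.HolderConjugate q] {φ : α → ℝ} {f : α → E} (hφ : AEStronglyMeasurable φ μ)
    (hf : AEStronglyMeasurable f μ) :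
    ‖∫ x, φ x • f x ∂μ‖ₑ ≤ eLpNorm φ p μ * eLpNorm f q μ := by
  have hHolder := eLpNorm_smul_le_mul_eLpNorm (p := p) (q := q) (r := 1) hf hφ
  rw [eLpNorm_one_eq_lintegral_enorm] at hHolder
  exact (enorm_integral_le_lintegral_enorm _).trans hHolder

lemma memLp_Ioo_cpow_sub_one {q : ℝ} (hq : 0 < q) {s : ℂ} (hs : -1 < (s.re - 1) * q) :
    MemLp (fun x : ℝ => (x : ℂ) ^ (s - 1)) (ENNReal.ofReal q) (volume.restrict (Ioo 0 1)) := by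
  have hmeas :
      AEStronglyMeasurable (fun x : ℝ => (x : ℂ) ^ (s - 1)) (volume.restrict (Ioo 0 1)) :=
    (by fun_prop : Measurable fun x : ℝ => (x : ℂ) ^ (s - 1)).aestronglyMeasurable
  refine (integrable_norm_rpow_iff hmeas (by simpa using hq) ENNReal.ofReal_ne_top).1 ?_
  have hpow : IntegrableOn (fun x : ℝ => x ^ ((s.re - 1) * q)) (Ioo 0 1) :=
    ((intervalIntegrable_iff_integrableOn_Ioc_of_le zero_le_one).1
      (intervalIntegral.intervalIntegrable_rpow' hs)).mono_set Ioo_subset_Ioc_self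
  refine hpow.congr_fun (fun x hx => ?_) measurableSet_Ioo
  dsimp only
  rw [ENNReal.toReal_ofReal hq.le, norm_cpow_eq_rpow_re_of_pos hx.1, sub_re, one_re,
    Real.rpow_mul hx.1.le]

/-- Beurling's sufficient condition: if `1 < p < ∞` with conjugate exponent `q`
and the Nyman–Beurling class is dense in `L^p(0,1)`, then `ζ(z) ≠ 0` for
`Re z > 1/p`. -/
theorem nb_dense_Lp_imp_zero_free (p q : ℝ) (hp : 1 < p) (hq : 1 / p + 1 / q = 1)
    (hdense : ∀ g : ℝ → ℝ, MemLp g (ENNReal.ofReal p) (volume.restrict (Ioo (0:ℝ) 1)) →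
      ∀ ε > (0:ℝ), ∃ (m : ℕ) (c β : Fin m → ℝ), 1 ≤ m ∧
        (∀ i, β i ∈ Ioo (0:ℝ) 1) ∧ (∑ i, c i * β i = 0) ∧
        eLpNorm (fun x => g x - ∑ i, c i * Int.fract (β i / x)) (ENNReal.ofReal p)
            (volume.restrict (Ioo (0:ℝ) 1)) < ENNReal.ofReal ε)
    (z : ℂ) (hz : 1 / p < z.re) :
    riemannZeta z ≠ 0 := by
  intro hζ
  obtain rfl | hz1 := eq_or_ne z 1
  · exact riemannZeta_one_ne_zero hζ
  have hpq : p.HolderConjugate q := Real.holderConjugate_iff.2 ⟨hp, by simpa [one_div] using hq⟩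
  have := hpq.ennrealOfReal
  have hz0 : 0 < z.re := (one_div_pos.2 hpq.pos).trans hz
  have hexp : -1 < (z.re - 1) * q := by
    have hq' : (1 / p - 1) * q = -1 := by
      rw [show 1 / p - 1 = -(1 / q) by linarith, neg_mul, one_div_mul_cancel hpq.symm.ne_zero]
    nlinarith [hpq.symm.pos]
  have hw := memLp_Ioo_cpow_sub_one hpq.symm.pos hexp
  obtain ⟨ε, hε, hεw⟩ := ENNReal.exists_nnreal_pos_mul_lt hw.eLpNorm_ne_top
    (enorm_ne_zero.2 (one_div_ne_zero (ne_zero_of_re_pos hz0)))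
  obtain ⟨m, c, β, -, hβ, hcβ, hg⟩ := hdense (fun _ => 1) (memLp_const 1) ε hε
  have hint := integral_Ioo_one_sub_sum_fract_div_smul_cpow c β
    (fun i => Ioo_subset_Ioc_self (hβ i)) hcβ hz0 hz1
  rw [hζ, zero_mul, add_zero] at hint
  refine hεw.not_ge ?_
  calc ‖1 / z‖ₑ
    _ ≤ eLpNorm (fun x => 1 - ∑ i, c i * Int.fract (β i / x)) (ENNReal.ofReal p)
          (volume.restrict (Ioo 0 1)) * eLpNorm _ (ENNReal.ofReal q) _ :=
      hint ▸ enorm_integral_smul_le_eLpNorm_mul_eLpNorm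
        (by fun_prop : Measurable fun x => 1 - ∑ i, c i * Int.fract (β i / x)).aestronglyMeasurable
        hw.1
    _ ≤ ε * eLpNorm _ (ENNReal.ofReal q) _ := by
      gcongr
      simpa using hg.le
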